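/- arXiv:2307.12850 — 3 statements merged into one kernel-verified Lean document; each statement's English description precedes it below -/
import Mathlib

section
/- For every integer n ≥ 3, the matrix |H_n|⁻¹H_n is symmetric and orthogonal, i.e. (|H_n|⁻¹H_n)ᵀ = |H_n|⁻¹H_n and (|H_n|⁻¹H_n)² = I_{2mn}, and moreover rank(|H_n|⁻¹A_n − |H_n|⁻¹H_n) ≤ 2m; in particular |H_n|⁻¹A_n is the sum of a real symmetric orthogonal matrix and a matrix of rank at most 2m. -/
open Matrix Filter MeasureTheory
open scoped Matrix.Norms.L2Operator
open scoped MatrixOrder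

noncomputable section

/- `Tmat m n L` : the block lower-triangular banded block-Toeplitz matrix
`T_n ∈ ℝ^{mn×mn}`, with `n×n` blocks each of size `m×m`, whose `(i,j)`-th block equals
`L` if `i = j`, `-2·I_m` if `i = j+1`, `L` if `i = j+2`, and `0` otherwise. -/
def Tmat (m n : ℕ) (L : Matrix (Fin m) (Fin m) ℝ) :
    Matrix (Fin n × Fin m) (Fin n × Fin m) ℝ := fun p q =>
  if (p.1 : ℕ) = (q.1 : ℕ) then L p.2 q.2
  else if (p.1 : ℕ) = (q.1 : ℕ) + 1 then (if p.2 = q.2 then (-2 : ℝ) else 0)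
  else if (p.1 : ℕ) = (q.1 : ℕ) + 2 then L p.2 q.2
  else 0

/- `Ǐ_n ⊗ I_m` with `Ǐ_n = diag(1,…,1,1/2)`. -/
def checkI (m n : ℕ) : Matrix (Fin n × Fin m) (Fin n × Fin m) ℝ :=
  Matrix.diagonal fun p => if (p.1 : ℕ) = n - 1 then (1 / 2 : ℝ) else 1

/- `Î_n ⊗ I_m` with `Î_n = diag(1/2,1,…,1)`. -/
def hatI (m n : ℕ) : Matrix (Fin n × Fin m) (Fin n × Fin m) ℝ :=
  Matrix.diagonal fun p => if (p.1 : ℕ) = 0 then (1 / 2 : ℝ) else 1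

/- `A_n = [[α(Ǐ_n⊗I_m), T_nᵀ],[T_n, −α(Î_n⊗I_m)]] ∈ ℝ^{2mn×2mn}`. -/
def Amat (m n : ℕ) (α : ℝ) (L : Matrix (Fin m) (Fin m) ℝ) :
    Matrix ((Fin n × Fin m) ⊕ (Fin n × Fin m)) ((Fin n × Fin m) ⊕ (Fin n × Fin m)) ℝ :=
  Matrix.fromBlocks (α • checkI m n) (Tmat m n L)ᵀ (Tmat m n L) (-(α • hatI m n))

/- `H_n = [[α·I_{mn}, T_nᵀ],[T_n, −α·I_{mn}]] ∈ ℝ^{2mn×2mn}`. -/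
def Hmat (m n : ℕ) (α : ℝ) (L : Matrix (Fin m) (Fin m) ℝ) :
    Matrix ((Fin n × Fin m) ⊕ (Fin n × Fin m)) ((Fin n × Fin m) ⊕ (Fin n × Fin m)) ℝ :=
  Matrix.fromBlocks (α • 1) (Tmat m n L)ᵀ (Tmat m n L) (-(α • 1))

/- the unique symmetric positive semidefinite square root of a positive semidefinite
real matrix (junk value `0` if the matrix is not positive semidefinite). -/
open scoped Classical in
def matSqrt {k : Type*} [Fintype k] [DecidableEq k] (M : Matrix k k ℝ) : Matrix k k ℝ :=
  if h : M.PosSemidef then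
    h.1.eigenvectorUnitary.1 * diagonal ((RCLike.ofReal : ℝ → ℝ) ∘ (√·) ∘ h.1.eigenvalues) *
      (star h.1.eigenvectorUnitary : Matrix k k ℝ) else 0

/- `|H_n| = (H_n²)^{1/2}`, the unique symmetric positive definite square root of `H_n²`. -/
def absH (m n : ℕ) (α : ℝ) (L : Matrix (Fin m) (Fin m) ℝ) :
    Matrix ((Fin n × Fin m) ⊕ (Fin n × Fin m)) ((Fin n × Fin m) ⊕ (Fin n × Fin m)) ℝ :=
  matSqrt (Hmat m n α L * Hmat m n α L)

/- `|H_n|⁻¹H_n` is real symmetric and orthogonal and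
`rank(|H_n|⁻¹A_n − |H_n|⁻¹H_n) ≤ 2m`. -/
/-- A block diagonal matrix with positive definite blocks is positive definite. -/
lemma posDef_fromBlocks_diag {k l : Type*} [Fintype k] [DecidableEq k] [Fintype l]
    [DecidableEq l] {A : Matrix k k ℝ} {D : Matrix l l ℝ}
    (hA : A.PosDef) (hD : D.PosDef) : (Matrix.fromBlocks A 0 0 D).PosDef := by
  rw [posDef_iff_dotProduct_mulVec]
  constructor
  · show _ᴴ = _
    rw [fromBlocks_conjTranspose, conjTranspose_zero, conjTranspose_zero, hA.1.eq, hD.1.eq]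
  · intro x hx
    have hx' : x = Sum.elim (x ∘ Sum.inl) (x ∘ Sum.inr) := (Sum.elim_comp_inl_inr x).symm
    rw [hx', fromBlocks_mulVec]
    simp only [star_trivial, Sum.elim_comp_inl, Sum.elim_comp_inr, Matrix.zero_mulVec,
      add_zero, zero_add, sumElim_dotProduct_sumElim]
    by_cases h : x ∘ Sum.inl = 0
    · have hr : x ∘ Sum.inr ≠ 0 := fun h2 => hx (by rw [hx', h, h2]; ext (i|i) <;> rfl)
      have h1 := hA.posSemidef.dotProduct_mulVec_nonneg (x ∘ Sum.inl)
      have h2 := hD.dotProduct_mulVec_pos hr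
      rw [star_trivial] at h1 h2
      exact add_pos_of_nonneg_of_pos h1 h2
    · have h1 := hA.dotProduct_mulVec_pos h
      have h2 := hD.posSemidef.dotProduct_mulVec_nonneg (x ∘ Sum.inr)
      rw [star_trivial] at h1 h2
      exact add_pos_of_pos_of_nonneg h1 h2

/-- A hermitian real matrix commutes with the psd square root of its square. -/
lemma sqrt_comm {k : Type*} [Fintype k] [DecidableEq k] {H : Matrix k k ℝ}
    (hH : H.IsHermitian) (h2 : (H * H).PosSemidef) :
    H * CFC.sqrt (H * H) = CFC.sqrt (H * H) * H := by
  rw [CFC.sqrt_eq_cfc]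
  exact (Commute.cfc_nnreal ((Commute.refl H).mul_left (Commute.refl H)) NNReal.sqrt).symm.eq

theorem stmt_3 (m n : ℕ) (hm : 1 ≤ m) (hn : 3 ≤ n) (α : ℝ) (hα : 0 < α)
    (L : Matrix (Fin m) (Fin m) ℝ) (hL : L.PosDef) :
    ((absH m n α L)⁻¹ * Hmat m n α L)ᵀ = (absH m n α L)⁻¹ * Hmat m n α L ∧
    ((absH m n α L)⁻¹ * Hmat m n α L) * ((absH m n α L)⁻¹ * Hmat m n α L) = 1 ∧
    ((absH m n α L)⁻¹ * Amat m n α L - (absH m n α L)⁻¹ * Hmat m n α L).rank ≤ 2 * m := by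
  set T : Matrix (Fin n × Fin m) (Fin n × Fin m) ℝ := Tmat m n L with hTdef
  set H := Hmat m n α L with hHdef
  -- symmetry of H
  have hHt : Hᵀ = H := by
    rw [hHdef]
    unfold Hmat
    rw [fromBlocks_transpose, transpose_transpose, transpose_neg, transpose_smul, transpose_one]
  have hHsym : H.IsHermitian := by
    rw [IsHermitian, conjTranspose_eq_transpose_of_trivial, hHt]
  -- H * H is block diagonal and positive definite
  have hHH : H * H = Matrix.fromBlocks ((α * α) • 1 + Tᵀ * T) 0 0 (T * Tᵀ + (α * α) • 1) := by
    rw [hHdef]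
    show Matrix.fromBlocks (α • 1) Tᵀ T (-(α • 1)) * Matrix.fromBlocks (α • 1) Tᵀ T (-(α • 1)) = _
    rw [fromBlocks_multiply]
    simp [Matrix.fromBlocks_inj, Matrix.smul_mul, Matrix.mul_smul, Matrix.mul_neg,
      Matrix.neg_mul, smul_smul]
  have hsm : ((α * α) • (1 : Matrix (Fin n × Fin m) (Fin n × Fin m) ℝ)).PosDef := by
    rw [Matrix.smul_one_eq_diagonal]
    exact Matrix.posDef_diagonal_iff.mpr fun i => mul_pos hα hα
  have hTT : (Tᵀ * T).PosSemidef := by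
    have := Matrix.posSemidef_conjTranspose_mul_self T
    rwa [conjTranspose_eq_transpose_of_trivial] at this
  have hTT' : (T * Tᵀ).PosSemidef := by
    have := Matrix.posSemidef_self_mul_conjTranspose T
    rwa [conjTranspose_eq_transpose_of_trivial] at this
  have h2pd : (H * H).PosDef := by
    rw [hHH]
    exact posDef_fromBlocks_diag (hsm.add_posSemidef hTT) (Matrix.PosDef.posSemidef_add hTT' hsm)
  have h2 : (H * H).PosSemidef := h2pd.posSemidef
  set P := absH m n α L with hPdef
  have hPsqrt : P = CFC.sqrt (H * H) := by
    rw [hPdef]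
    unfold absH matSqrt
    rw [← hHdef, dif_pos h2, CFC.sqrt_eq_cfc, cfc_nnreal_eq_real _ _ h2.nonneg, h2.1.cfc_eq,
      IsHermitian.cfc, Unitary.conjStarAlgAut_apply]
    congr 3
    funext i
    simp [Real.coe_toNNReal', max_eq_left (h2.eigenvalues_nonneg i)]
  have hcomm : H * P = P * H := by rw [hPsqrt]; exact sqrt_comm hHsym h2
  have hPP : P * P = H * H := by rw [hPsqrt]; exact CFC.sqrt_mul_sqrt_self _ h2.nonneg
  have hPsd : P.PosSemidef := by rw [hPsqrt]; exact Matrix.nonneg_iff_posSemidef.mp (CFC.sqrt_nonneg _)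
  have hPt : Pᵀ = P := by
    have := hPsd.1.eq
    rwa [conjTranspose_eq_transpose_of_trivial] at this
  have hdetHH : IsUnit (H * H).det := h2pd.det_pos.ne'.isUnit
  have hdetP : IsUnit P.det := by
    rw [isUnit_iff_ne_zero]
    intro h
    apply h2pd.det_pos.ne'
    rw [← hPP, det_mul, h, mul_zero]
  have hPinv : P⁻¹ * P = 1 := Matrix.nonsing_inv_mul _ hdetP
  have hPinv' : P * P⁻¹ = 1 := Matrix.mul_nonsing_inv _ hdetP
  have hcomm' : P⁻¹ * H = H * P⁻¹ := by
    calc P⁻¹ * H = P⁻¹ * H * (P * P⁻¹) := by rw [hPinv', Matrix.mul_one]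
      _ = P⁻¹ * (H * P) * P⁻¹ := by simp only [Matrix.mul_assoc]
      _ = P⁻¹ * (P * H) * P⁻¹ := by rw [hcomm]
      _ = (P⁻¹ * P) * (H * P⁻¹) := by simp only [Matrix.mul_assoc]
      _ = H * P⁻¹ := by rw [hPinv, Matrix.one_mul]
  refine ⟨?_, ?_, ?_⟩
  · rw [transpose_mul, hHt, transpose_nonsing_inv, hPt, hcomm']
  · calc (P⁻¹ * H) * (P⁻¹ * H) = P⁻¹ * (H * P⁻¹) * H := by simp only [Matrix.mul_assoc]
      _ = P⁻¹ * (P⁻¹ * H) * H := by rw [hcomm']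
      _ = (P⁻¹ * P⁻¹) * (H * H) := by simp only [Matrix.mul_assoc]
      _ = (P * P)⁻¹ * (H * H) := by rw [Matrix.mul_inv_rev]
      _ = 1 := by rw [hPP, Matrix.nonsing_inv_mul _ hdetHH]
  · -- rank bound
    set d1 : Fin n × Fin m → ℝ :=
      fun p => α * (if (p.1 : ℕ) = n - 1 then (1 / 2 : ℝ) else 1) - α with hd1
    set d2 : Fin n × Fin m → ℝ :=
      fun p => α - α * (if (p.1 : ℕ) = 0 then (1 / 2 : ℝ) else 1) with hd2
    have hAH : Amat m n α L - H = Matrix.diagonal (Sum.elim d1 d2) := by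
      rw [hHdef]
      unfold Amat Hmat checkI hatI
      ext p q
      cases p with
      | inl i => cases q with
        | inl j =>
          by_cases hij : i = j <;>
            simp [hij, Matrix.sub_apply, Matrix.diagonal_apply, Matrix.one_apply, hd1] <;>
            (try split_ifs) <;> ring
        | inr j => simp [Matrix.sub_apply]
      | inr i => cases q with
        | inl j => simp [Matrix.sub_apply]
        | inr j =>
          by_cases hij : i = j <;>
            simp [hij, Matrix.sub_apply, Matrix.diagonal_apply, Matrix.one_apply, hd2] <;>
            (try split_ifs) <;> ring
    rw [← Matrix.mul_sub]
    refine le_trans (Matrix.rank_mul_le_right _ _) ?_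
    rw [hAH, Matrix.rank_diagonal]
    -- count nonzero entries
    have hinj : Function.Injective
        (fun x : {p : (Fin n × Fin m) ⊕ (Fin n × Fin m) // Sum.elim d1 d2 p ≠ 0} =>
          Sum.map Prod.snd Prod.snd x.1) := by
      rintro ⟨a, ha⟩ ⟨b, hb⟩ hab
      have hfst1 : ∀ p : Fin n × Fin m, d1 p ≠ 0 → (p.1 : ℕ) = n - 1 := by
        intro p hp
        by_contra hc
        apply hp
        simp [hd1, hc]
      have hfst2 : ∀ p : Fin n × Fin m, d2 p ≠ 0 → (p.1 : ℕ) = 0 := by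
        intro p hp
        by_contra hc
        apply hp
        simp [hd2, hc]
      ext1
      cases a with
      | inl p => cases b with
        | inl q =>
          simp only [Sum.map_inl, Sum.inl.injEq] at hab ⊢
          have h1 := hfst1 p ha
          have h2 := hfst1 q hb
          exact Prod.ext (Fin.ext (h1.trans h2.symm)) hab
        | inr q => simp at hab
      | inr p => cases b with
        | inl q => simp at hab
        | inr q =>
          simp only [Sum.map_inr, Sum.inr.injEq] at hab ⊢
          have h1 := hfst2 p ha
          have h2 := hfst2 q hb
          exact Prod.ext (Fin.ext (h1.trans h2.symm)) hab
    calc Fintype.card {p // Sum.elim d1 d2 p ≠ 0}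
        ≤ Fintype.card (Fin m ⊕ Fin m) := Fintype.card_le_of_injective _ hinj
      _ = 2 * m := by simp [Fintype.card_sum, two_mul]
end
end

section
/- For every positive integer K and every integer n with n > 4Km, rank((T_nᵀT_n + α²I_{mn})^K − (G_nᵀG_n + α²I_{mn})^K) ≤ 4Km. -/
open Matrix Filter MeasureTheory
open scoped Matrix.Norms.L2Operator

noncomputable section

/- `G_n` : the block Tau approximation of `T_n`: symmetric block tridiagonal
block-Toeplitz with `(i,j)`-th `m×m` block equal to `2·I_m` if `i = j`, `−L` if
`|i − j| = 1`, and `0` otherwise. -/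
def Gmat (m n : ℕ) (L : Matrix (Fin m) (Fin m) ℝ) :
    Matrix (Fin n × Fin m) (Fin n × Fin m) ℝ := fun p q =>
  if (p.1 : ℕ) = (q.1 : ℕ) then (if p.2 = q.2 then (2 : ℝ) else 0)
  else if (p.1 : ℕ) = (q.1 : ℕ) + 1 ∨ (q.1 : ℕ) = (p.1 : ℕ) + 1 then -(L p.2 q.2)
  else 0

set_option linter.unusedSectionVars false

section Aux

variable {ι κ : Type*} [Fintype ι] [Fintype κ] [DecidableEq ι] [DecidableEq κ]

lemma myrank_add_le (A B : Matrix ι ι ℝ) : (A + B).rank ≤ A.rank + B.rank := by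
  have h : LinearMap.range (A + B).mulVecLin ≤
      LinearMap.range A.mulVecLin ⊔ LinearMap.range B.mulVecLin := by
    rw [Matrix.mulVecLin_add]
    rintro x ⟨y, rfl⟩
    exact Submodule.add_mem_sup ⟨y, rfl⟩ ⟨y, rfl⟩
  have h2 := Submodule.finrank_sup_add_finrank_inf_eq
    (LinearMap.range A.mulVecLin) (LinearMap.range B.mulVecLin)
  have h3 := Submodule.finrank_mono h
  unfold Matrix.rank
  omega

lemma myrank_le_of_rows (M : Matrix ι ι ℝ) (e : κ → ι) (he : Function.Injective e)
    (h0 : ∀ i, (∀ k, e k ≠ i) → ∀ j, M i j = 0) :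
    M.rank ≤ Fintype.card κ := by
  classical
  have hM : M = (Matrix.of fun i k => if i = e k then (1:ℝ) else 0) * M.submatrix e id := by
    ext i j
    rw [Matrix.mul_apply]
    by_cases h : ∃ k, e k = i
    · obtain ⟨k0, hk0⟩ := h
      rw [Finset.sum_eq_single k0]
      · simp [Matrix.submatrix_apply, hk0.symm]
      · intro k _ hk
        have hik : i ≠ e k := by
          intro hh
          exact hk (he (hk0.trans hh)).symm
        simp [Matrix.of_apply, hik]
      · intro habs
        exact absurd (Finset.mem_univ k0) habs
    · push_neg at h
      have hz : ∀ j, M i j = 0 := h0 i (fun k => h k)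
      rw [hz j, eq_comm]
      apply Finset.sum_eq_zero
      intro k _
      have : i ≠ e k := fun hh => h k hh.symm
      simp [Matrix.of_apply, this]
  rw [hM]
  exact le_trans (Matrix.rank_mul_le_right _ _) (Matrix.rank_le_card_height _)

lemma myrank_pow_sub (A B : Matrix ι ι ℝ) (r : ℕ) (h : (A - B).rank ≤ r) :
    ∀ K : ℕ, (A ^ K - B ^ K).rank ≤ K * r := by
  intro K
  induction K with
  | zero => simp
  | succ k ih =>
    have hid : A ^ (k+1) - B ^ (k+1) = A ^ k * (A - B) + (A ^ k - B ^ k) * B := by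
      rw [pow_succ, pow_succ]
      noncomm_ring
    rw [hid]
    calc (A ^ k * (A - B) + (A ^ k - B ^ k) * B).rank
        ≤ (A ^ k * (A - B)).rank + ((A ^ k - B ^ k) * B).rank := myrank_add_le _ _
      _ ≤ (A - B).rank + (A ^ k - B ^ k).rank :=
          Nat.add_le_add (Matrix.rank_mul_le_right _ _) (Matrix.rank_mul_le_left _ _)
      _ ≤ r + k * r := Nat.add_le_add h ih
      _ = (k + 1) * r := by ring

end Aux

def Smat (m n : ℕ) : Matrix (Fin n × Fin m) (Fin n × Fin m) ℝ := fun p q =>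
  if (p.1 : ℕ) = (q.1 : ℕ) + 1 ∧ p.2 = q.2 then 1 else 0

def Emat (m n : ℕ) (L : Matrix (Fin m) (Fin m) ℝ) :
    Matrix (Fin n × Fin m) (Fin n × Fin m) ℝ := fun p q =>
  if (p.1 : ℕ) = 0 ∧ (q.1 : ℕ) = 0 then L p.2 q.2 else 0

def Pmat (m n : ℕ) : Matrix (Fin n × Fin m) (Fin n × Fin m) ℝ := fun p q =>
  if p = q ∧ (p.1 : ℕ) = n - 1 then 1 else 0

lemma T_eq (m n : ℕ) (L : Matrix (Fin m) (Fin m) ℝ) :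
    Tmat m n L = -(Smat m n * Gmat m n L) + Emat m n L := by
  ext ⟨i, a⟩ ⟨j, b⟩
  by_cases hi : (i : ℕ) = 0
  · have hSG : (Smat m n * Gmat m n L) (i, a) (j, b) = 0 := by
      rw [Matrix.mul_apply]
      apply Finset.sum_eq_zero
      intro r _
      have hne : ¬((i : ℕ) = (r.1 : ℕ) + 1 ∧ a = r.2) := by
        rintro ⟨h1, _⟩; omega
      simp [Smat, hne]
    simp only [Matrix.add_apply, Matrix.neg_apply, hSG, neg_zero, zero_add]
    simp only [Tmat, Emat]
    split_ifs <;> first | rfl | (exfalso; omega)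
  · have hi1 : 1 ≤ (i : ℕ) := by omega
    have hilt : (i : ℕ) - 1 < n := by omega
    set k : Fin n := ⟨(i : ℕ) - 1, hilt⟩ with hkdef
    have hk : (k : ℕ) = (i : ℕ) - 1 := rfl
    have hSG : (Smat m n * Gmat m n L) (i, a) (j, b) = Gmat m n L (k, a) (j, b) := by
      rw [Matrix.mul_apply]
      rw [Finset.sum_eq_single (k, a)]
      · have hc : (i : ℕ) = ((k, a).1 : ℕ) + 1 ∧ a = (k, a).2 := ⟨by show (i : ℕ) = (k : ℕ) + 1; omega, rfl⟩
        show (if _ then (1:ℝ) else 0) * _ = _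
        rw [if_pos hc, one_mul]
      · intro r _ hr
        have hne : ¬((i : ℕ) = (r.1 : ℕ) + 1 ∧ a = r.2) := by
          rintro ⟨h1, h2⟩
          apply hr
          have h3 : r.1 = k := by
            apply Fin.ext; omega
          rw [Prod.ext_iff]
          exact ⟨h3, h2.symm⟩
        simp [Smat, hne]
      · intro habs
        exact absurd (Finset.mem_univ _) habs
    simp only [Matrix.add_apply, Matrix.neg_apply, hSG]
    simp only [Tmat, Gmat, Emat]
    split_ifs <;> first | (exfalso; omega) | ring
  done

lemma StS_eq (m n : ℕ) : (Smat m n)ᵀ * Smat m n = 1 - Pmat m n := by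
  ext ⟨i, a⟩ ⟨j, b⟩
  rw [Matrix.mul_apply]
  by_cases hi : (i : ℕ) + 1 < n
  · have hSG : ∑ r : Fin n × Fin m, (Smat m n)ᵀ (i, a) r * Smat m n r (j, b)
        = Smat m n (⟨(i : ℕ) + 1, hi⟩, a) (j, b) := by
      rw [Finset.sum_eq_single ((⟨(i : ℕ) + 1, hi⟩ : Fin n), a)]
      · show Smat m n _ (i, a) * _ = _
        have hc : (((⟨(i : ℕ) + 1, hi⟩ : Fin n), a).1 : ℕ) = (i : ℕ) + 1 ∧ ((⟨(i : ℕ) + 1, hi⟩ : Fin n), a).2 = a := ⟨rfl, rfl⟩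
        show (if _ then (1:ℝ) else 0) * _ = _
        rw [if_pos hc, one_mul]
      · intro r _ hr
        have hne : ¬((r.1 : ℕ) = (i : ℕ) + 1 ∧ r.2 = a) := by
          rintro ⟨h1, h2⟩
          apply hr
          have h3 : r.1 = ⟨(i : ℕ) + 1, hi⟩ := by
            apply Fin.ext
            show (r.1 : ℕ) = (i : ℕ) + 1
            omega
          rw [Prod.ext_iff]
          exact ⟨h3, h2⟩
        simp [Matrix.transpose_apply, Smat, hne]
      · intro habs
        exact absurd (Finset.mem_univ _) habs
    rw [hSG]
    simp only [Smat, Matrix.sub_apply, Matrix.one_apply, Pmat, Prod.mk.injEq, Prod.ext_iff,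
      Fin.ext_iff, Fin.val_mk]
    split_ifs <;> first | (exfalso; omega) | norm_num
  · have hz : ∑ r : Fin n × Fin m, (Smat m n)ᵀ (i, a) r * Smat m n r (j, b) = 0 := by
      apply Finset.sum_eq_zero
      intro r _
      have hne : ¬((r.1 : ℕ) = (i : ℕ) + 1 ∧ r.2 = a) := by
        rintro ⟨h1, _⟩
        have := r.1.isLt
        omega
      simp [Matrix.transpose_apply, Smat, hne]
    rw [hz]
    have hin : (i : ℕ) = n - 1 := by have := i.isLt; omega
    simp only [Matrix.sub_apply, Matrix.one_apply, Pmat, Prod.ext_iff, Fin.ext_iff]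
    split_ifs <;> first | (exfalso; omega) | norm_num

lemma rank_Pmat (m n : ℕ) (hn : 0 < n) : (Pmat m n).rank ≤ m := by
  have := myrank_le_of_rows (Pmat m n) (fun a : Fin m => ((⟨n - 1, by omega⟩ : Fin n), a))
    (fun a b h => by simpa using congrArg Prod.snd h)
    (by
      intro p hp q
      have hne : (p.1 : ℕ) ≠ n - 1 := by
        intro hh
        apply hp p.2
        apply Prod.ext
        · apply Fin.ext; simpa using hh.symm
        · rfl
      have : ¬(p = q ∧ (p.1 : ℕ) = n - 1) := by rintro ⟨_, h2⟩; exact hne h2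
      simp [Pmat, this])
  simpa using this

lemma Emat_row_zero (m n : ℕ) (L : Matrix (Fin m) (Fin m) ℝ) (hn : 0 < n)
    {p : Fin n × Fin m} (hp : (p.1 : ℕ) ≠ 0) (q : Fin n × Fin m) :
    Emat m n L p q = 0 := by
  have : ¬((p.1 : ℕ) = 0 ∧ (q.1 : ℕ) = 0) := by rintro ⟨h1, _⟩; exact hp h1
  simp [Emat, this]

lemma rank_row0 (m n : ℕ) (hn : 0 < n) (M : Matrix (Fin n × Fin m) (Fin n × Fin m) ℝ)
    (h0 : ∀ p : Fin n × Fin m, (p.1 : ℕ) ≠ 0 → ∀ q, M p q = 0) : M.rank ≤ m := by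
  have := myrank_le_of_rows M (fun a : Fin m => ((⟨0, hn⟩ : Fin n), a))
    (fun a b h => by simpa using congrArg Prod.snd h)
    (by
      intro p hp q
      apply h0 p _ q
      intro hh
      apply hp p.2
      apply Prod.ext
      · apply Fin.ext; simpa using hh.symm
      · rfl)
  simpa using this

/- Rank bound on the difference of `K`-th powers. -/
theorem stmt_10 (m : ℕ) (hm : 1 ≤ m) (α : ℝ) (hα : 0 < α)
    (L : Matrix (Fin m) (Fin m) ℝ) (hL : L.PosDef)
    (K : ℕ) (hK : 1 ≤ K) (n : ℕ) (hn : 4 * K * m < n) :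
    (((Tmat m n L)ᵀ * Tmat m n L + (α ^ 2) • 1) ^ K -
      ((Gmat m n L)ᵀ * Gmat m n L + (α ^ 2) • 1) ^ K).rank ≤ 4 * K * m := by
  have h4 : 4 ≤ 4 * K * m :=
    le_trans (by norm_num) (Nat.mul_le_mul (Nat.mul_le_mul_left 4 hK) hm)
  have hnpos : 0 < n := by omega
  set T := Tmat m n L
  set G := Gmat m n L
  set S := Smat m n
  set E := Emat m n L
  set P := Pmat m n
  have hEt : ∀ p : Fin n × Fin m, (p.1 : ℕ) ≠ 0 → ∀ q, Eᵀ p q = 0 := by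
    intro p hp q
    simp only [Matrix.transpose_apply]
    have : ¬((q.1 : ℕ) = 0 ∧ (p.1 : ℕ) = 0) := by rintro ⟨_, h2⟩; exact hp h2
    simp [E, Emat, this]
  have hrE : E.rank ≤ m := rank_row0 m n hnpos E (fun p hp q => Emat_row_zero m n L hnpos hp q)
  have hrEt : Eᵀ.rank ≤ m := rank_row0 m n hnpos Eᵀ hEt
  have hrP : P.rank ≤ m := rank_Pmat m n hnpos
  -- decomposition of the difference
  have hdiff : Tᵀ * T - Gᵀ * G =
      (-(Gᵀ)) * (P * G) + ((-(Gᵀ)) * (Sᵀ * E) + (Eᵀ * (-(S * G)) + Eᵀ * E)) := by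
    have hT := T_eq m n L
    have hS := StS_eq m n
    have expand : (-(S * G) + E)ᵀ * (-(S * G) + E)
        = Gᵀ * ((Sᵀ * S) * G) - Gᵀ * (Sᵀ * E) - Eᵀ * (S * G) + Eᵀ * E := by
      simp only [Matrix.transpose_add, Matrix.transpose_neg, Matrix.transpose_mul]
      noncomm_ring
    rw [show T = -(S * G) + E from hT, expand, hS]
    noncomm_ring
  have hrdiff : (Tᵀ * T - Gᵀ * G).rank ≤ 4 * m := by
    rw [hdiff]
    calc ((-(Gᵀ)) * (P * G) + ((-(Gᵀ)) * (Sᵀ * E) + (Eᵀ * (-(S * G)) + Eᵀ * E))).rank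
        ≤ ((-(Gᵀ)) * (P * G)).rank + ((-(Gᵀ)) * (Sᵀ * E) + (Eᵀ * (-(S * G)) + Eᵀ * E)).rank :=
          myrank_add_le _ _
      _ ≤ ((-(Gᵀ)) * (P * G)).rank + (((-(Gᵀ)) * (Sᵀ * E)).rank
            + (Eᵀ * (-(S * G)) + Eᵀ * E).rank) :=
          Nat.add_le_add_left (myrank_add_le _ _) _
      _ ≤ ((-(Gᵀ)) * (P * G)).rank + (((-(Gᵀ)) * (Sᵀ * E)).rank
            + ((Eᵀ * (-(S * G))).rank + (Eᵀ * E).rank)) := by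
          exact Nat.add_le_add_left (Nat.add_le_add_left (myrank_add_le _ _) _) _
      _ ≤ m + (m + (m + m)) := by
          have b1 : ((-(Gᵀ)) * (P * G)).rank ≤ m :=
            le_trans (Matrix.rank_mul_le_right _ _) (le_trans (Matrix.rank_mul_le_left _ _) hrP)
          have b2 : ((-(Gᵀ)) * (Sᵀ * E)).rank ≤ m :=
            le_trans (Matrix.rank_mul_le_right _ _) (le_trans (Matrix.rank_mul_le_right _ _) hrE)
          have b3 : (Eᵀ * (-(S * G))).rank ≤ m :=
            le_trans (Matrix.rank_mul_le_left _ _) hrEt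
          have b4 : (Eᵀ * E).rank ≤ m := le_trans (Matrix.rank_mul_le_right _ _) hrE
          exact Nat.add_le_add b1 (Nat.add_le_add b2 (Nat.add_le_add b3 b4))
      _ = 4 * m := by ring
  have hsub : (Tᵀ * T + (α ^ 2) • 1) - (Gᵀ * G + (α ^ 2) • 1) = Tᵀ * T - Gᵀ * G := by
    abel
  have := myrank_pow_sub (Tᵀ * T + (α ^ 2) • 1) (Gᵀ * G + (α ^ 2) • 1) (4 * m)
    (by rw [hsub]; exact hrdiff) K
  calc ((Tᵀ * T + (α ^ 2) • 1) ^ K - (Gᵀ * G + (α ^ 2) • 1) ^ K).rank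
      ≤ K * (4 * m) := this
    _ = 4 * K * m := by ring
end
end

section
/- For every integer n ≥ 5, the matrix T_nᵀT_n − G_nᵀG_n (= T_nᵀT_n − G_n²) vanishes in all m×m blocks except the following: its (1,1) block equals L², its (n−1,n−1) block equals −L², its (n−1,n) and (n,n−1) blocks equal 2L, and its (n,n) block equals −4·I_m; in particular rank(T_nᵀT_n − G_nᵀG_n) ≤ 4m. -/
open Matrix Filter MeasureTheory
open scoped Matrix.Norms.L2Operator

noncomputable section

section AuxRank

private lemma sumA (n t : ℕ) (v : ℝ) :
    ∑ k : Fin n, (if (k:ℕ) = t then v else 0) = if t < n then v else 0 := by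
  split
  · rename_i h
    rw [Finset.sum_eq_single (⟨t, h⟩ : Fin n)]
    · simp
    · intro k _ hk
      rw [if_neg]; intro hc; exact hk (Fin.ext hc)
    · simp
  · rename_i h
    rw [Finset.sum_eq_zero]
    intro k _
    rw [if_neg]; intro hc; exact h (hc ▸ k.isLt)

private lemma sumB (n t : ℕ) (v : ℝ) :
    ∑ k : Fin n, (if t = (k:ℕ) + 1 then v else 0) = if 1 ≤ t ∧ t ≤ n then v else 0 := by
  split
  · rename_i h
    have ht : t - 1 < n := by omega
    rw [Finset.sum_eq_single (⟨t - 1, ht⟩ : Fin n)]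
    · rw [if_pos]; simp; omega
    · intro k _ hk
      rw [if_neg]; intro hc
      exact hk (Fin.ext (by simp; omega))
    · simp
  · rename_i h
    rw [Finset.sum_eq_zero]
    intro k _
    rw [if_neg]; intro hc
    exact h (by constructor <;> omega)

private lemma sumAA {n : ℕ} (s t : ℕ) (x y r : ℝ) :
    ∑ k : Fin n, (if (k:ℕ) = s then x else 0) * (if (k:ℕ) = t then y else 0) * r
      = if s = t ∧ s < n then x*y*r else 0 := by
  have h : ∀ k : Fin n, (if (k:ℕ) = s then x else 0) * (if (k:ℕ) = t then y else 0) * r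
      = if (k:ℕ) = s then (if s = t then x*y*r else 0) else 0 := by
    intro k; split_ifs <;> first | ring1 | (exfalso; omega)
  simp_rw [h, sumA]
  split_ifs <;> first | rfl | (exfalso; omega)

private lemma sumAB {n : ℕ} (s t : ℕ) (x y r : ℝ) :
    ∑ k : Fin n, (if (k:ℕ) = s then x else 0) * (if t = (k:ℕ) + 1 then y else 0) * r
      = if t = s + 1 ∧ s < n then x*y*r else 0 := by
  have h : ∀ k : Fin n, (if (k:ℕ) = s then x else 0) * (if t = (k:ℕ) + 1 then y else 0) * r
      = if (k:ℕ) = s then (if t = s + 1 then x*y*r else 0) else 0 := by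
    intro k; split_ifs <;> first | ring1 | (exfalso; omega)
  simp_rw [h, sumA]
  split_ifs <;> first | rfl | (exfalso; omega)

private lemma sumBA {n : ℕ} (s t : ℕ) (x y r : ℝ) :
    ∑ k : Fin n, (if s = (k:ℕ) + 1 then x else 0) * (if (k:ℕ) = t then y else 0) * r
      = if s = t + 1 ∧ t < n then x*y*r else 0 := by
  have h : ∀ k : Fin n, (if s = (k:ℕ) + 1 then x else 0) * (if (k:ℕ) = t then y else 0) * r
      = if (k:ℕ) = t then (if s = t + 1 then x*y*r else 0) else 0 := by
    intro k; split_ifs <;> first | ring1 | (exfalso; omega)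
  simp_rw [h, sumA]
  split_ifs <;> first | rfl | (exfalso; omega)

private lemma sumBB {n : ℕ} (s t : ℕ) (x y r : ℝ) :
    ∑ k : Fin n, (if s = (k:ℕ) + 1 then x else 0) * (if t = (k:ℕ) + 1 then y else 0) * r
      = if s = t ∧ 1 ≤ s ∧ s ≤ n then x*y*r else 0 := by
  have h : ∀ k : Fin n, (if s = (k:ℕ) + 1 then x else 0) * (if t = (k:ℕ) + 1 then y else 0) * r
      = if s = (k:ℕ) + 1 then (if s = t then x*y*r else 0) else 0 := by
    intro k; split_ifs <;> first | ring1 | (exfalso; omega)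
  simp_rw [h, sumB]
  split_ifs <;> first | rfl | (exfalso; omega)

end AuxRank

private lemma final_scalar (n p q : ℕ) (hp : p < n) (hq : q < n) (hn : 5 ≤ n) (P lab dab : ℝ) :
    ((if p = q ∧ p < n then 1*1*P else 0) + (if p = q+2 ∧ p < n then 1*1*P else 0)
      + (if p+2 = q ∧ p+2 < n then 1*1*P else 0) + (if p+2 = q+2 ∧ p+2 < n then 1*1*P else 0)
      + (if p = q+1 ∧ p < n then 1*(-2)*lab else 0) + (if p+2 = q+1 ∧ p+2 < n then 1*(-2)*lab else 0)
      + (if p+1 = q ∧ p+1 < n then (-2)*1*lab else 0) + (if p+1 = q+2 ∧ p+1 < n then (-2)*1*lab else 0)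
      + (if p+1 = q+1 ∧ p+1 < n then (-2)*(-2)*dab else 0))
    - ((if p+1 = q+1 ∧ p+1 < n then (-1)*(-1)*P else 0) + (if q = p+1+1 ∧ p+1 < n then (-1)*(-1)*P else 0)
      + (if p = q+1+1 ∧ q+1 < n then (-1)*(-1)*P else 0) + (if p = q ∧ 1 ≤ p ∧ p ≤ n then (-1)*(-1)*P else 0)
      + (if p+1 = q ∧ p+1 < n then (-1)*2*lab else 0) + (if p = q+1 ∧ q < n then (-1)*2*lab else 0)
      + (if p = q+1 ∧ p < n then 2*(-1)*lab else 0) + (if q = p+1 ∧ p < n then 2*(-1)*lab else 0)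
      + (if p = q ∧ p < n then 2*2*dab else 0))
  = if p = 0 ∧ q = 0 then P
    else if p = n-2 ∧ q = n-2 then -P
    else if (p = n-2 ∧ q = n-1) ∨ (p = n-1 ∧ q = n-2) then 2*lab
    else if p = n-1 ∧ q = n-1 then -4*dab
    else 0 := by
  rcases show (p = q ∧ q = 0) ∨ (p = q ∧ 1 ≤ q ∧ q + 2 < n) ∨ (p = q ∧ q = n-2) ∨ (p = q ∧ q = n-1)
      ∨ (p = q+1 ∧ p+1 < n) ∨ (p = q+1 ∧ p = n-1)
      ∨ (q = p+1 ∧ q+1 < n) ∨ (q = p+1 ∧ q = n-1)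
      ∨ (p = q+2) ∨ (q = p+2) ∨ (p+3 ≤ q ∨ q+3 ≤ p) from by omega with
    ⟨h1,h2⟩|⟨h1,h2⟩|⟨h1,h2⟩|⟨h1,h2⟩|⟨h1,h2⟩|⟨h1,h2⟩|⟨h1,h2⟩|⟨h1,h2⟩|h1|h1|h1
  · subst h1; subst h2
    norm_num [show (0:ℕ)+1 < n from by omega, show (0:ℕ)+2 < n from by omega,
      show (0:ℕ) ≠ n-2 from by omega, show (0:ℕ) ≠ n-1 from by omega, show 0 < n from by omega]
  · subst h1
    simp only [show p ≠ p+2 from by omega, show p+2 ≠ p from by omega,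
      show p ≠ p+1 from by omega, show p+1 ≠ p from by omega,
      show p+2 ≠ p+1 from by omega, show p+1 ≠ p+2 from by omega,
      show p ≠ p+1+1 from by omega,
      show p ≠ 0 from by omega, show p ≠ n-2 from by omega, show p ≠ n-1 from by omega,
      show p < n from hp, show p+1 < n from by omega, show p+2 < n from h2.2,
      show 1 ≤ p from h2.1, show p ≤ n from by omega,
      and_true, true_and, and_self, if_true, if_false, false_and, and_false, or_self,
      ite_true, ite_false, eq_self_iff_true]
    ring
  · subst h1; subst h2
    simp only [show n-2 ≠ n-2+2 from by omega, show n-2+2 ≠ n-2 from by omega,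
      show n-2 ≠ n-2+1 from by omega, show n-2+1 ≠ n-2 from by omega,
      show n-2+2 ≠ n-2+1 from by omega, show n-2+1 ≠ n-2+2 from by omega,
      show n-2 ≠ n-2+1+1 from by omega,
      show n-2 ≠ 0 from by omega, show n-2 ≠ n-1 from by omega,
      show n-2 < n from by omega, show n-2+1 < n from by omega, show ¬(n-2+2 < n) from by omega,
      show 1 ≤ n-2 from by omega, show n-2 ≤ n from by omega,
      and_true, true_and, and_self, if_true, if_false, false_and, and_false, or_self,
      ite_true, ite_false, eq_self_iff_true]
    ring
  · subst h1; subst h2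
    simp only [show n-1 ≠ n-1+2 from by omega, show n-1+2 ≠ n-1 from by omega,
      show n-1 ≠ n-1+1 from by omega, show n-1+1 ≠ n-1 from by omega,
      show n-1+2 ≠ n-1+1 from by omega, show n-1+1 ≠ n-1+2 from by omega,
      show n-1 ≠ n-1+1+1 from by omega,
      show n-1 ≠ 0 from by omega, show n-1 ≠ n-2 from by omega,
      show n-1 < n from by omega, show ¬(n-1+1 < n) from by omega, show ¬(n-1+2 < n) from by omega,
      show 1 ≤ n-1 from by omega, show n-1 ≤ n from by omega,
      and_true, true_and, and_self, if_true, if_false, false_and, and_false, or_self,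
      ite_true, ite_false, eq_self_iff_true]
    ring
  · subst h1
    simp only [show q+1 ≠ q from by omega, show q+1 ≠ q+2 from by omega,
      show q+1+2 ≠ q from by omega, show q+1+2 ≠ q+2 from by omega,
      show q+1+2 ≠ q+1 from by omega, show q+1+1 ≠ q from by omega,
      show q+1+1 ≠ q+1 from by omega, show q ≠ q+1+2 from by omega,
      show q ≠ q+1+1 from by omega, show q+1 ≠ q+1+1 from by omega,
      show q ≠ q+1+1+1 from by omega,
      show q+1+1 = q+2 from by omega,
      show ¬(q+1 = 0 ∧ q = 0) from by omega, show ¬(q+1 = n-2 ∧ q = n-2) from by omega,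
      show ¬((q+1 = n-2 ∧ q = n-1) ∨ (q+1 = n-1 ∧ q = n-2)) from by omega,
      show ¬(q+1 = n-1 ∧ q = n-1) from by omega,
      show q < n from hq, show q+1 < n from by omega, show q+1+1 < n from h2, show q+2 < n from by omega,
      and_true, true_and, and_self, if_true, if_false, false_and, and_false, or_self,
      ite_true, ite_false, eq_self_iff_true]
    ring
  · subst h1
    simp only [show q+1 ≠ q from by omega, show q+1 ≠ q+2 from by omega,
      show q+1+2 ≠ q from by omega, show q+1+2 ≠ q+2 from by omega,
      show q+1+2 ≠ q+1 from by omega, show q+1+1 ≠ q from by omega,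
      show q+1+1 ≠ q+1 from by omega, show q ≠ q+1+2 from by omega,
      show q ≠ q+1+1 from by omega, show q+1 ≠ q+1+1 from by omega,
      show q ≠ q+1+1+1 from by omega,
      show q+1+1 = q+2 from by omega,
      show ¬(q+1 = 0 ∧ q = 0) from by omega, show ¬(q+1 = n-2 ∧ q = n-2) from by omega,
      show ((q+1 = n-2 ∧ q = n-1) ∨ (q+1 = n-1 ∧ q = n-2)) from by omega,
      show q < n from hq, show q+1 < n from by omega, show ¬(q+1+1 < n) from by omega,
      show ¬(q+2 < n) from by omega,
      and_true, true_and, and_self, if_true, if_false, false_and, and_false, or_self,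
      ite_true, ite_false, eq_self_iff_true]
    ring
  · subst h1
    simp only [show p ≠ p+1 from by omega, show p+1 ≠ p from by omega,
      show p ≠ p+1+2 from by omega, show p+2 ≠ p+1+2 from by omega,
      show p+1 ≠ p+1+2 from by omega, show p ≠ p+1+1 from by omega,
      show p+1 ≠ p+1+1 from by omega, show p+1+2 ≠ p from by omega,
      show p+1+1 ≠ p from by omega, show p ≠ p+3 from by omega, show p+3 ≠ p from by omega,
      show p+1 ≠ p+2 from by omega, show p+2 ≠ p+1 from by omega,
      show p ≠ p+1+1+1 from by omega,
      show p+2 = p+1+1 from by omega,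
      show ¬(p = 0 ∧ p+1 = 0) from by omega, show ¬(p = n-2 ∧ p+1 = n-2) from by omega,
      show ¬((p = n-2 ∧ p+1 = n-1) ∨ (p = n-1 ∧ p+1 = n-2)) from by omega,
      show ¬(p = n-1 ∧ p+1 = n-1) from by omega,
      show p < n from hp, show p+1 < n from by omega, show p+1+1 < n from h2, show p+2 < n from by omega,
      and_true, true_and, and_self, if_true, if_false, false_and, and_false, or_self,
      ite_true, ite_false, eq_self_iff_true]
    ring
  · subst h1
    simp only [show p ≠ p+1 from by omega, show p+1 ≠ p from by omega,
      show p ≠ p+1+2 from by omega, show p+2 ≠ p+1+2 from by omega,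
      show p+1 ≠ p+1+2 from by omega, show p ≠ p+1+1 from by omega,
      show p+1 ≠ p+1+1 from by omega, show p+1+2 ≠ p from by omega,
      show p+1+1 ≠ p from by omega,
      show p+1 ≠ p+2 from by omega, show p+2 ≠ p+1 from by omega,
      show p ≠ p+1+1+1 from by omega,
      show p+2 = p+1+1 from by omega,
      show ¬(p = 0 ∧ p+1 = 0) from by omega, show ¬(p = n-2 ∧ p+1 = n-2) from by omega,
      show ((p = n-2 ∧ p+1 = n-1) ∨ (p = n-1 ∧ p+1 = n-2)) from by omega,
      show p < n from hp, show p+1 < n from by omega, show ¬(p+1+1 < n) from by omega,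
      show ¬(p+2 < n) from by omega,
      and_true, true_and, and_self, if_true, if_false, false_and, and_false, or_self,
      ite_true, ite_false, eq_self_iff_true]
    ring
  · subst h1
    simp only [show q+2 ≠ q from by omega, show q+2+2 ≠ q from by omega,
      show q+2+2 ≠ q+2 from by omega, show q+2 ≠ q+1 from by omega,
      show q+2+2 ≠ q+1 from by omega, show q+2+1 ≠ q from by omega,
      show q+2+1 ≠ q+2 from by omega, show q+2+1 ≠ q+1 from by omega,
      show q ≠ q+2+2 from by omega, show q ≠ q+2+1 from by omega,
      show q ≠ q+2+1+1 from by omega,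
      show q+2 = q+1+1 from by omega,
      show ¬(q+2 = 0 ∧ q = 0) from by omega, show ¬(q+2 = n-2 ∧ q = n-2) from by omega,
      show ¬((q+2 = n-2 ∧ q = n-1) ∨ (q+2 = n-1 ∧ q = n-2)) from by omega,
      show ¬(q+2 = n-1 ∧ q = n-1) from by omega,
      show q < n from hq, show q+1 < n from by omega, show q+2 < n from hp,
      and_true, true_and, and_self, if_true, if_false, false_and, and_false, or_self,
      ite_true, ite_false, eq_self_iff_true]
    ring
  · subst h1
    simp only [show p ≠ p+2 from by omega, show p+2 ≠ p+2+2 from by omega,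
      show p ≠ p+2+2 from by omega, show p ≠ p+2+1 from by omega,
      show p+2 ≠ p+2+1 from by omega, show p+1 ≠ p+2 from by omega,
      show p+1 ≠ p+2+2 from by omega, show p+1 ≠ p+2+1 from by omega,
      show p+2+2 ≠ p+2 from by omega, show p+2+1 ≠ p+1 from by omega,
      show p+2 ≠ p+1 from by omega, show p+2 ≠ p from by omega,
      show p ≠ p+2+1+1 from by omega,
      show p+2 = p+1+1 from by omega,
      show ¬(p = 0 ∧ p+2 = 0) from by omega, show ¬(p = n-2 ∧ p+2 = n-2) from by omega,
      show ¬((p = n-2 ∧ p+2 = n-1) ∨ (p = n-1 ∧ p+2 = n-2)) from by omega,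
      show ¬(p = n-1 ∧ p+2 = n-1) from by omega,
      show p < n from hp, show p+1 < n from by omega, show p+2 < n from hq,
      and_true, true_and, and_self, if_true, if_false, false_and, and_false, or_self,
      ite_true, ite_false, eq_self_iff_true]
    ring
  · simp only [show p ≠ q from by omega, show p ≠ q+2 from by omega,
      show p+2 ≠ q from by omega, show p+2 ≠ q+2 from by omega,
      show p ≠ q+1 from by omega, show p+2 ≠ q+1 from by omega,
      show p+1 ≠ q from by omega, show p+1 ≠ q+2 from by omega,
      show p+1 ≠ q+1 from by omega, show q ≠ p+2 from by omega, show q ≠ p+1 from by omega,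
      show q ≠ p+1+1 from by omega, show p ≠ q+1+1 from by omega,
      show ¬(p = 0 ∧ q = 0) from by omega, show ¬(p = n-2 ∧ q = n-2) from by omega,
      show ¬((p = n-2 ∧ q = n-1) ∨ (p = n-1 ∧ q = n-2)) from by omega,
      show ¬(p = n-1 ∧ q = n-1) from by omega,
      and_true, true_and, and_self, if_true, if_false, false_and, and_false, or_self,
      ite_true, ite_false, eq_self_iff_true]
    ring

private lemma Lsymm {m : ℕ} {L : Matrix (Fin m) (Fin m) ℝ} (hL : L.PosDef) (a b : Fin m) :
    L a b = L b a := by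
  have h := hL.isHermitian
  have := congrFun (congrFun h.symm b) a
  simpa [Matrix.conjTranspose_apply] using this.symm

private lemma sum_LL {m : ℕ} {L : Matrix (Fin m) (Fin m) ℝ} (hL : L.PosDef) (a b : Fin m) :
    ∑ c : Fin m, L c a * L c b = (L * L) a b := by
  rw [Matrix.mul_apply]
  exact Finset.sum_congr rfl fun c _ => by rw [Lsymm hL a c]

private lemma sum_dL {m : ℕ} {L : Matrix (Fin m) (Fin m) ℝ} (a b : Fin m) :
    ∑ c : Fin m, (if c = a then (1:ℝ) else 0) * L c b = L a b := by
  rw [Finset.sum_eq_single a] <;> simp +contextual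

private lemma sum_Ld {m : ℕ} {L : Matrix (Fin m) (Fin m) ℝ} (hL : L.PosDef) (a b : Fin m) :
    ∑ c : Fin m, L c a * (if c = b then (1:ℝ) else 0) = L a b := by
  rw [Finset.sum_eq_single b] <;> simp +contextual [Lsymm hL a b]

private lemma sum_dd {m : ℕ} (a b : Fin m) :
    ∑ c : Fin m, (if c = a then (1:ℝ) else 0) * (if c = b then (1:ℝ) else 0)
      = if a = b then (1:ℝ) else 0 := by
  rw [Finset.sum_eq_single a] <;> simp +contextual [eq_comm]

private lemma Tsplit {m n : ℕ} {L : Matrix (Fin m) (Fin m) ℝ} (k i : Fin n) (c a : Fin m) :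
    Tmat m n L (k, c) (i, a)
      = (if (k:ℕ) = (i:ℕ) then (1:ℝ) else 0) * L c a
        + (if (k:ℕ) = (i:ℕ) + 2 then (1:ℝ) else 0) * L c a
        + (if (k:ℕ) = (i:ℕ) + 1 then (-2:ℝ) else 0) * (if c = a then (1:ℝ) else 0) := by
  simp only [Tmat]
  split_ifs <;> first | ring1 | (exfalso; omega)

private lemma Gsplit {m n : ℕ} {L : Matrix (Fin m) (Fin m) ℝ} (k i : Fin n) (c a : Fin m) :
    Gmat m n L (k, c) (i, a)
      = ((if (k:ℕ) = (i:ℕ) + 1 then (-1:ℝ) else 0) + (if (i:ℕ) = (k:ℕ) + 1 then (-1:ℝ) else 0)) * L c a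
        + (if (k:ℕ) = (i:ℕ) then (2:ℝ) else 0) * (if c = a then (1:ℝ) else 0) := by
  simp only [Gmat]
  split_ifs <;> first | ring1 | (exfalso; omega)

private lemma Tinner {m n : ℕ} (L : Matrix (Fin m) (Fin m) ℝ) (hL : L.PosDef)
    (k i j : Fin n) (a b : Fin m) :
    ∑ c : Fin m, Tmat m n L (k, c) (i, a) * Tmat m n L (k, c) (j, b)
      = (if (k:ℕ) = (i:ℕ) then (1:ℝ) else 0) * (if (k:ℕ) = (j:ℕ) then (1:ℝ) else 0) * ((L*L) a b)
      + (if (k:ℕ) = (i:ℕ) then (1:ℝ) else 0) * (if (k:ℕ) = (j:ℕ)+2 then (1:ℝ) else 0) * ((L*L) a b)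
      + (if (k:ℕ) = (i:ℕ)+2 then (1:ℝ) else 0) * (if (k:ℕ) = (j:ℕ) then (1:ℝ) else 0) * ((L*L) a b)
      + (if (k:ℕ) = (i:ℕ)+2 then (1:ℝ) else 0) * (if (k:ℕ) = (j:ℕ)+2 then (1:ℝ) else 0) * ((L*L) a b)
      + (if (k:ℕ) = (i:ℕ) then (1:ℝ) else 0) * (if (k:ℕ) = (j:ℕ)+1 then (-2:ℝ) else 0) * (L a b)
      + (if (k:ℕ) = (i:ℕ)+2 then (1:ℝ) else 0) * (if (k:ℕ) = (j:ℕ)+1 then (-2:ℝ) else 0) * (L a b)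
      + (if (k:ℕ) = (i:ℕ)+1 then (-2:ℝ) else 0) * (if (k:ℕ) = (j:ℕ) then (1:ℝ) else 0) * (L a b)
      + (if (k:ℕ) = (i:ℕ)+1 then (-2:ℝ) else 0) * (if (k:ℕ) = (j:ℕ)+2 then (1:ℝ) else 0) * (L a b)
      + (if (k:ℕ) = (i:ℕ)+1 then (-2:ℝ) else 0) * (if (k:ℕ) = (j:ℕ)+1 then (-2:ℝ) else 0) * (if a = b then (1:ℝ) else 0) := by
  have h : ∀ c : Fin m, Tmat m n L (k, c) (i, a) * Tmat m n L (k, c) (j, b)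
      = (if (k:ℕ) = (i:ℕ) then (1:ℝ) else 0) * (if (k:ℕ) = (j:ℕ) then (1:ℝ) else 0) * (L c a * L c b)
      + (if (k:ℕ) = (i:ℕ) then (1:ℝ) else 0) * (if (k:ℕ) = (j:ℕ)+2 then (1:ℝ) else 0) * (L c a * L c b)
      + (if (k:ℕ) = (i:ℕ)+2 then (1:ℝ) else 0) * (if (k:ℕ) = (j:ℕ) then (1:ℝ) else 0) * (L c a * L c b)
      + (if (k:ℕ) = (i:ℕ)+2 then (1:ℝ) else 0) * (if (k:ℕ) = (j:ℕ)+2 then (1:ℝ) else 0) * (L c a * L c b)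
      + (if (k:ℕ) = (i:ℕ) then (1:ℝ) else 0) * (if (k:ℕ) = (j:ℕ)+1 then (-2:ℝ) else 0) * (L c a * (if c = b then (1:ℝ) else 0))
      + (if (k:ℕ) = (i:ℕ)+2 then (1:ℝ) else 0) * (if (k:ℕ) = (j:ℕ)+1 then (-2:ℝ) else 0) * (L c a * (if c = b then (1:ℝ) else 0))
      + (if (k:ℕ) = (i:ℕ)+1 then (-2:ℝ) else 0) * (if (k:ℕ) = (j:ℕ) then (1:ℝ) else 0) * ((if c = a then (1:ℝ) else 0) * L c b)
      + (if (k:ℕ) = (i:ℕ)+1 then (-2:ℝ) else 0) * (if (k:ℕ) = (j:ℕ)+2 then (1:ℝ) else 0) * ((if c = a then (1:ℝ) else 0) * L c b)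
      + (if (k:ℕ) = (i:ℕ)+1 then (-2:ℝ) else 0) * (if (k:ℕ) = (j:ℕ)+1 then (-2:ℝ) else 0) * ((if c = a then (1:ℝ) else 0) * (if c = b then (1:ℝ) else 0)) := by
    intro c; rw [Tsplit, Tsplit]; ring1
  rw [Finset.sum_congr rfl fun c _ => h c]
  simp only [Finset.sum_add_distrib, ← Finset.mul_sum]
  rw [sum_LL hL, sum_Ld hL, sum_dL, sum_dd]

private lemma Ginner {m n : ℕ} (L : Matrix (Fin m) (Fin m) ℝ) (hL : L.PosDef)
    (k i j : Fin n) (a b : Fin m) :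
    ∑ c : Fin m, Gmat m n L (k, c) (i, a) * Gmat m n L (k, c) (j, b)
      = (if (k:ℕ) = (i:ℕ)+1 then (-1:ℝ) else 0) * (if (k:ℕ) = (j:ℕ)+1 then (-1:ℝ) else 0) * ((L*L) a b)
      + (if (k:ℕ) = (i:ℕ)+1 then (-1:ℝ) else 0) * (if (j:ℕ) = (k:ℕ)+1 then (-1:ℝ) else 0) * ((L*L) a b)
      + (if (i:ℕ) = (k:ℕ)+1 then (-1:ℝ) else 0) * (if (k:ℕ) = (j:ℕ)+1 then (-1:ℝ) else 0) * ((L*L) a b)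
      + (if (i:ℕ) = (k:ℕ)+1 then (-1:ℝ) else 0) * (if (j:ℕ) = (k:ℕ)+1 then (-1:ℝ) else 0) * ((L*L) a b)
      + (if (k:ℕ) = (i:ℕ)+1 then (-1:ℝ) else 0) * (if (k:ℕ) = (j:ℕ) then (2:ℝ) else 0) * (L a b)
      + (if (i:ℕ) = (k:ℕ)+1 then (-1:ℝ) else 0) * (if (k:ℕ) = (j:ℕ) then (2:ℝ) else 0) * (L a b)
      + (if (k:ℕ) = (i:ℕ) then (2:ℝ) else 0) * (if (k:ℕ) = (j:ℕ)+1 then (-1:ℝ) else 0) * (L a b)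
      + (if (k:ℕ) = (i:ℕ) then (2:ℝ) else 0) * (if (j:ℕ) = (k:ℕ)+1 then (-1:ℝ) else 0) * (L a b)
      + (if (k:ℕ) = (i:ℕ) then (2:ℝ) else 0) * (if (k:ℕ) = (j:ℕ) then (2:ℝ) else 0) * (if a = b then (1:ℝ) else 0) := by
  have h : ∀ c : Fin m, Gmat m n L (k, c) (i, a) * Gmat m n L (k, c) (j, b)
      = (if (k:ℕ) = (i:ℕ)+1 then (-1:ℝ) else 0) * (if (k:ℕ) = (j:ℕ)+1 then (-1:ℝ) else 0) * (L c a * L c b)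
      + (if (k:ℕ) = (i:ℕ)+1 then (-1:ℝ) else 0) * (if (j:ℕ) = (k:ℕ)+1 then (-1:ℝ) else 0) * (L c a * L c b)
      + (if (i:ℕ) = (k:ℕ)+1 then (-1:ℝ) else 0) * (if (k:ℕ) = (j:ℕ)+1 then (-1:ℝ) else 0) * (L c a * L c b)
      + (if (i:ℕ) = (k:ℕ)+1 then (-1:ℝ) else 0) * (if (j:ℕ) = (k:ℕ)+1 then (-1:ℝ) else 0) * (L c a * L c b)
      + (if (k:ℕ) = (i:ℕ)+1 then (-1:ℝ) else 0) * (if (k:ℕ) = (j:ℕ) then (2:ℝ) else 0) * (L c a * (if c = b then (1:ℝ) else 0))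
      + (if (i:ℕ) = (k:ℕ)+1 then (-1:ℝ) else 0) * (if (k:ℕ) = (j:ℕ) then (2:ℝ) else 0) * (L c a * (if c = b then (1:ℝ) else 0))
      + (if (k:ℕ) = (i:ℕ) then (2:ℝ) else 0) * (if (k:ℕ) = (j:ℕ)+1 then (-1:ℝ) else 0) * ((if c = a then (1:ℝ) else 0) * L c b)
      + (if (k:ℕ) = (i:ℕ) then (2:ℝ) else 0) * (if (j:ℕ) = (k:ℕ)+1 then (-1:ℝ) else 0) * ((if c = a then (1:ℝ) else 0) * L c b)
      + (if (k:ℕ) = (i:ℕ) then (2:ℝ) else 0) * (if (k:ℕ) = (j:ℕ) then (2:ℝ) else 0) * ((if c = a then (1:ℝ) else 0) * (if c = b then (1:ℝ) else 0)) := by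
    intro c; rw [Gsplit, Gsplit]; ring1
  rw [Finset.sum_congr rfl fun c _ => h c]
  simp only [Finset.sum_add_distrib, ← Finset.mul_sum]
  rw [sum_LL hL, sum_Ld hL, sum_dL, sum_dd]

private lemma entry_eq {m n : ℕ} (L : Matrix (Fin m) (Fin m) ℝ) (hL : L.PosDef) (hn : 5 ≤ n)
    (i j : Fin n) (a b : Fin m) :
    ((Tmat m n L)ᵀ * Tmat m n L - (Gmat m n L)ᵀ * Gmat m n L) (i, a) (j, b) =
      if (i : ℕ) = 0 ∧ (j : ℕ) = 0 then (L * L) a b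
      else if (i : ℕ) = n - 2 ∧ (j : ℕ) = n - 2 then -((L * L) a b)
      else if ((i : ℕ) = n - 2 ∧ (j : ℕ) = n - 1) ∨ ((i : ℕ) = n - 1 ∧ (j : ℕ) = n - 2)
        then 2 * L a b
      else if (i : ℕ) = n - 1 ∧ (j : ℕ) = n - 1 then (if a = b then (-4 : ℝ) else 0)
      else 0 := by
  have hd : (if a = b then (-4:ℝ) else 0) = -4 * (if a = b then (1:ℝ) else 0) := by
    split_ifs <;> ring1
  rw [hd, Matrix.sub_apply, Matrix.mul_apply, Matrix.mul_apply]
  simp only [Matrix.transpose_apply]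
  rw [Fintype.sum_prod_type, Fintype.sum_prod_type]
  simp_rw [Tinner L hL, Ginner L hL, Finset.sum_add_distrib, sumAA, sumAB, sumBA, sumBB]
  exact final_scalar n (i:ℕ) (j:ℕ) i.isLt j.isLt hn ((L*L) a b) (L a b) (if a = b then (1:ℝ) else 0)

private lemma rank_add_le' {ι : Type*} [Fintype ι] [DecidableEq ι] (A B : Matrix ι ι ℝ) :
    (A + B).rank ≤ A.rank + B.rank := by
  rw [Matrix.rank, Matrix.rank, Matrix.rank, Matrix.mulVecLin_add]
  have h : LinearMap.range (A.mulVecLin + B.mulVecLin)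
      ≤ LinearMap.range A.mulVecLin ⊔ LinearMap.range B.mulVecLin := by
    rintro x ⟨v, rfl⟩
    simp only [LinearMap.add_apply]
    exact Submodule.add_mem_sup ⟨v, rfl⟩ ⟨v, rfl⟩
  exact le_trans (Submodule.finrank_mono h)
    (Submodule.finrank_add_le_finrank_add_finrank _ _)

private lemma rank_rowBlock_le {m n : ℕ} (i0 : Fin n)
    (M : Matrix (Fin n × Fin m) (Fin n × Fin m) ℝ) :
    (Matrix.of fun p q => if p.1 = i0 then M p q else 0 :
      Matrix (Fin n × Fin m) (Fin n × Fin m) ℝ).rank ≤ m := by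
  have hfac : (Matrix.of fun p q => if p.1 = i0 then M p q else 0 :
        Matrix (Fin n × Fin m) (Fin n × Fin m) ℝ)
      = (Matrix.of fun p c => if p.1 = i0 ∧ p.2 = c then (1:ℝ) else 0 :
          Matrix (Fin n × Fin m) (Fin m) ℝ)
        * (Matrix.of fun c q => M (i0, c) q : Matrix (Fin m) (Fin n × Fin m) ℝ) := by
    ext ⟨i, a⟩ ⟨j, b⟩
    rw [Matrix.mul_apply]
    by_cases h : i = i0
    · subst h
      simp only [Matrix.of_apply, if_pos rfl, true_and]
      rw [Finset.sum_eq_single a]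
      · simp
      · intro c _ hc; rw [if_neg (by simpa [eq_comm] using hc)]; ring
      · simp
    · simp [Matrix.of_apply, h]
  rw [hfac]
  exact (Matrix.rank_mul_le_left _ _).trans
    ((Matrix.rank_le_card_width _).trans (by simp))

/- Block structure of `T_nᵀT_n − G_nᵀG_n` and the rank bound `≤ 4m`. -/
theorem stmt_16 (m n : ℕ) (hm : 1 ≤ m) (hn : 5 ≤ n)
    (L : Matrix (Fin m) (Fin m) ℝ) (hL : L.PosDef) :
    (∀ (i j : Fin n) (a b : Fin m),
      ((Tmat m n L)ᵀ * Tmat m n L - (Gmat m n L)ᵀ * Gmat m n L) (i, a) (j, b) =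
        if (i : ℕ) = 0 ∧ (j : ℕ) = 0 then (L * L) a b
        else if (i : ℕ) = n - 2 ∧ (j : ℕ) = n - 2 then -((L * L) a b)
        else if ((i : ℕ) = n - 2 ∧ (j : ℕ) = n - 1) ∨ ((i : ℕ) = n - 1 ∧ (j : ℕ) = n - 2)
          then 2 * L a b
        else if (i : ℕ) = n - 1 ∧ (j : ℕ) = n - 1 then (if a = b then (-4 : ℝ) else 0)
        else 0) ∧
    ((Tmat m n L)ᵀ * Tmat m n L - (Gmat m n L)ᵀ * Gmat m n L).rank ≤ 4 * m := by
  have hEntry : ∀ (i j : Fin n) (a b : Fin m),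
      ((Tmat m n L)ᵀ * Tmat m n L - (Gmat m n L)ᵀ * Gmat m n L) (i, a) (j, b) =
        if (i : ℕ) = 0 ∧ (j : ℕ) = 0 then (L * L) a b
        else if (i : ℕ) = n - 2 ∧ (j : ℕ) = n - 2 then -((L * L) a b)
        else if ((i : ℕ) = n - 2 ∧ (j : ℕ) = n - 1) ∨ ((i : ℕ) = n - 1 ∧ (j : ℕ) = n - 2)
          then 2 * L a b
        else if (i : ℕ) = n - 1 ∧ (j : ℕ) = n - 1 then (if a = b then (-4 : ℝ) else 0)
        else 0 := fun i j a b => entry_eq L hL hn i j a b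
  refine ⟨hEntry, ?_⟩
  set D := (Tmat m n L)ᵀ * Tmat m n L - (Gmat m n L)ᵀ * Gmat m n L with hD
  have hsupp : ∀ (i : Fin n) (a : Fin m) (j : Fin n) (b : Fin m),
      (i:ℕ) ≠ 0 → (i:ℕ) ≠ n-2 → (i:ℕ) ≠ n-1 → D (i, a) (j, b) = 0 := by
    intro i a j b h1 h2 h3
    rw [hEntry i j a b]
    split_ifs <;> first | rfl | (exfalso; omega)
  have hsplit : D = (Matrix.of fun p q => if p.1 = (⟨0, by omega⟩ : Fin n) then D p q else 0)
      + (Matrix.of fun p q => if p.1 = (⟨n-2, by omega⟩ : Fin n) then D p q else 0)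
      + (Matrix.of fun p q => if p.1 = (⟨n-1, by omega⟩ : Fin n) then D p q else 0) := by
    ext ⟨i, a⟩ ⟨j, b⟩
    have e0 : (i = (⟨0, by omega⟩ : Fin n)) ↔ (i:ℕ) = 0 :=
      ⟨fun h => by rw [h], fun h => Fin.ext h⟩
    have e2 : (i = (⟨n-2, by omega⟩ : Fin n)) ↔ (i:ℕ) = n-2 :=
      ⟨fun h => by rw [h], fun h => Fin.ext h⟩
    have e3 : (i = (⟨n-1, by omega⟩ : Fin n)) ↔ (i:ℕ) = n-1 :=
      ⟨fun h => by rw [h], fun h => Fin.ext h⟩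
    simp only [Matrix.add_apply, Matrix.of_apply,
      show ∀ (x : Fin n) (y : Fin m), (x, y).1 = x from fun _ _ => rfl, e0, e2, e3]
    split_ifs with h1 h2 h3 <;>
      first
        | (exfalso; omega)
        | ring1
        | (simp only [add_zero, zero_add]
           exact hsupp i a j b (by omega) (by omega) (by omega))
  have hr : D.rank ≤ m + m + m := by
    rw [hsplit]
    refine le_trans (rank_add_le' _ _) ?_
    refine le_trans (add_le_add (rank_add_le' _ _) (le_refl _)) ?_
    exact add_le_add (add_le_add (rank_rowBlock_le _ _) (rank_rowBlock_le _ _))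
      (rank_rowBlock_le _ _)
  exact hr.trans (by omega)
end
end
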